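/- arXiv:2007.07975 — 5 statements merged into one kernel-verified Lean document; each statement's English description precedes it below -/
import Mathlib

section
/- A strongly connected directed graph G with nonnegative arc costs is ξ-min-balanced (every arc e lies on a directed cycle C with c(f) ≤ ξ·c(e) for all f ∈ C) if and only if for every nonempty proper subset S of nodes, the minimum cost of an arc entering S is at most ξ times the minimum cost of an arc leaving S. -/
/-! If `(x, y)` is a cheapest arc leaving `S`, the cycle through it guaranteed by
min-balancedness must re-enter `S`, by an arc of cost at most `ξ c(x, y)`. Conversely, let `T`
be the set of nodes reachable from `y` through arcs of cost at most `ξ c(x, y)`. If `x ∉ T`, the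
arc `(x, y)` leaves `Tᶜ`, so the cut condition for `Tᶜ` yields an arc leaving `T` of cost at
most `ξ c(x, y)`, contradicting the choice of `T`; hence a cheap return walk from `y` to `x`
exists, and it can be taken simple. -/

open scoped Classical

variable {V : Type*}

/-- `IsWalk A u v l`: `u :: l` is a directed walk from `u` to `v` in the digraph with
arc relation `A`. -/
def IsWalk (A : V → V → Prop) (u v : V) (l : List V) : Prop :=
  List.Chain A u l ∧ (u :: l).getLast (List.cons_ne_nil u l) = v

/-- The list of arcs of the walk `u :: l`. -/
def walkArcs (u : V) (l : List V) : List (V × V) := (u :: l).zip l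

/-- The cost of a walk: the sum of the costs of its arcs. -/
noncomputable def walkCost (c : V → V → ℝ) (u : V) (l : List V) : ℝ :=
  ((walkArcs u l).map fun e => c e.1 e.2).sum

/-- A (simple) directed cycle through the arc `(x, y)`: the arc `(x, y)` together with a
walk from `y` back to `x` visiting pairwise distinct nodes. -/
def IsCycleThrough (A : V → V → Prop) (x y : V) (l : List V) : Prop :=
  A x y ∧ IsWalk A y x l ∧ (y :: l).Nodup

/-- The arcs of the cycle through `(x, y)` given by the return walk `y :: l`. -/
def cycleArcs (x y : V) (l : List V) : List (V × V) := (x, y) :: walkArcs y l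

/-- `G = (V, A, c)` is `ξ`-min-balanced: every arc lies on a directed cycle all of whose
arcs have cost at most `ξ` times the cost of the given arc. -/
def MinBalanced (A : V → V → Prop) (c : V → V → ℝ) (ξ : ℝ) : Prop :=
  ∀ x y, A x y → ∃ l, IsCycleThrough A x y l ∧
    ∀ f ∈ cycleArcs x y l, c f.1 f.2 ≤ ξ * c x y

/-- A digraph is strongly connected if there is a directed walk between any two nodes. -/
def StronglyConnected (A : V → V → Prop) : Prop := ∀ u v : V, ∃ l, IsWalk A u v l

/-- The bottleneck cost `b(i,j)`: the least `t` such that there is a directed `i`–`j`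
walk all of whose arcs have cost at most `t`. -/
noncomputable def bottleneck (A : V → V → Prop) (c : V → V → ℝ) (i j : V) : ℝ :=
  sInf {t | ∃ l, IsWalk A i j l ∧ ∀ f ∈ walkArcs i l, c f.1 f.2 ≤ t}

/-- The balance value `β(e)` of the arc `e = (x, y)`: the smallest `r` such that there is
a directed cycle through `e` all of whose arcs have cost at most `r`. -/
noncomputable def balanceValue (A : V → V → Prop) (c : V → V → ℝ) (x y : V) : ℝ :=
  sInf {r | ∃ l, IsCycleThrough A x y l ∧ ∀ f ∈ cycleArcs x y l, c f.1 f.2 ≤ r}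

theorem IsWalk.nil {A : V → V → Prop} (u : V) : IsWalk A u u [] :=
  ⟨List.IsChain.singleton u, rfl⟩

theorem isWalk_cons_iff {A : V → V → Prop} {u b v : V} {l : List V} :
    IsWalk A u v (b :: l) ↔ A u b ∧ IsWalk A b v l := by
  unfold IsWalk
  rw [List.Chain, List.isChain_cons_cons, List.getLast_cons (List.cons_ne_nil b l)]
  tauto

theorem IsWalk.eq_of_nil {A : V → V → Prop} {u v : V} (h : IsWalk A u v []) : u = v := h.2

theorem IsWalk.exists_arc_leaving {A : V → V → Prop} {S : Set V} :
    ∀ {l : List V} {u v : V}, IsWalk A u v l → u ∈ S → v ∉ S →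
      ∃ a ∈ S, ∃ b ∉ S, A a b ∧ (a, b) ∈ walkArcs u l
  | [], _, _, hw, hu, hv => absurd (hw.eq_of_nil ▸ hu) hv
  | b :: _, u, _, hw, hu, hv => by
    obtain ⟨hub, hw⟩ := isWalk_cons_iff.mp hw
    by_cases hb : b ∈ S
    · obtain ⟨a', ha', b', hb', hA, hmem⟩ := hw.exists_arc_leaving hb hv
      exact ⟨a', ha', b', hb', hA, List.mem_cons_of_mem _ hmem⟩
    · exact ⟨u, hu, b, hb, hub, List.mem_cons_self⟩

theorem IsWalk.exists_suffix_of_mem {A : V → V → Prop} :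
    ∀ {l : List V} {u v w : V}, IsWalk A u v l → w ∈ u :: l →
      ∃ s, IsWalk A w v s ∧ (w :: s) <:+ (u :: l) ∧ walkArcs w s ⊆ walkArcs u l
  | [], _, _, _, hw, hmem => by
    obtain rfl := List.mem_singleton.mp hmem
    exact ⟨[], hw, List.suffix_refl _, List.Subset.refl _⟩
  | b :: t, u, v, w, hw, hmem => by
    by_cases hwu : w = u
    · subst hwu
      exact ⟨b :: t, hw, List.suffix_refl _, List.Subset.refl _⟩
    · obtain ⟨s, hs, hsuf, harcs⟩ :=
        (isWalk_cons_iff.mp hw).2.exists_suffix_of_mem (List.mem_of_ne_of_mem hwu hmem)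
      exact ⟨s, hs, hsuf.trans (List.suffix_cons _ _),
        fun _ h => List.mem_cons_of_mem _ (harcs h)⟩

/-- If the new starting node already lies on the walk, continue from that later visit. -/
theorem exists_nodup_walk_of_reflTransGen {A P : V → V → Prop} {u v : V}
    (h : Relation.ReflTransGen (fun a b => A a b ∧ P a b) u v) :
    ∃ l, IsWalk A u v l ∧ (u :: l).Nodup ∧ ∀ f ∈ walkArcs u l, P f.1 f.2 := by
  induction h using Relation.ReflTransGen.head_induction_on with
  | refl => exact ⟨[], IsWalk.nil v, List.nodup_singleton v, by simp [walkArcs]⟩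
  | @head u b hub _ ih =>
    obtain ⟨l, hw, hnd, hP⟩ := ih
    by_cases hu : u ∈ b :: l
    · obtain ⟨s, hs, hsuf, harcs⟩ := hw.exists_suffix_of_mem hu
      exact ⟨s, hs, hnd.sublist hsuf.sublist, fun f hf => hP f (harcs hf)⟩
    · refine ⟨b :: l, isWalk_cons_iff.mpr ⟨hub.1, hw⟩, List.nodup_cons.mpr ⟨hu, hnd⟩,
        ?_⟩
      rintro f (_ | ⟨_, hf⟩)
      exacts [hub.2, hP f hf]

/-- `sInf (cutCosts A c S)` is the bottleneck `b(S, S̄)`. -/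
def cutCosts (A : V → V → Prop) (c : V → V → ℝ) (S : Set V) : Set ℝ :=
  {t | ∃ x ∈ S, ∃ y ∉ S, A x y ∧ c x y = t}

section CutCosts

variable {A : V → V → Prop} {c : V → V → ℝ} {S : Set V}

theorem cutCosts_compl :
    cutCosts A c Sᶜ = {t | ∃ x ∉ S, ∃ y ∈ S, A x y ∧ c x y = t} := by
  simp [cutCosts]

theorem cutCosts_finite [Finite V] : (cutCosts A c S).Finite :=
  (Set.finite_range fun p : V × V => c p.1 p.2).subset <| by
    unfold cutCosts
    rintro _ ⟨x, -, y, -, -, rfl⟩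
    exact ⟨(x, y), rfl⟩

theorem sInf_cutCosts_le [Finite V] {x y : V} (hx : x ∈ S) (hy : y ∉ S) (hxy : A x y) :
    sInf (cutCosts A c S) ≤ c x y :=
  csInf_le cutCosts_finite.bddBelow ⟨x, hx, y, hy, hxy, rfl⟩

theorem exists_arc_leaving_eq_sInf_cutCosts [Finite V] (hsc : StronglyConnected A)
    {u v : V} (hu : u ∈ S) (hv : v ∉ S) :
    ∃ x ∈ S, ∃ y ∉ S, A x y ∧ c x y = sInf (cutCosts A c S) := by
  obtain ⟨l, hl⟩ := hsc u v
  obtain ⟨a, ha, b, hb, hab, -⟩ := hl.exists_arc_leaving hu hv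
  exact Set.Nonempty.csInf_mem (s := cutCosts A c S) ⟨c a b, a, ha, b, hb, hab, rfl⟩
    cutCosts_finite

theorem lt_of_mem_cutCosts_reachable {B t : ℝ} {y : V}
    (ht : t ∈ cutCosts A c {v | Relation.ReflTransGen (fun a b => A a b ∧ c a b ≤ B) y v}) :
    B < t := by
  obtain ⟨a, ha, b, hb, hab, rfl⟩ := ht
  by_contra! hle
  exact hb (ha.tail ⟨hab, hle⟩)

end CutCosts

/-- A strongly connected digraph with nonnegative arc costs is
`ξ`-min-balanced iff for every nonempty proper node subset `S`, the minimum cost of an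
arc entering `S` is at most `ξ` times the minimum cost of an arc leaving `S`. -/
theorem minBalanced_iff_cut_condition [Fintype V] (A : V → V → Prop) (c : V → V → ℝ)
    (hc : ∀ x y, A x y → 0 ≤ c x y) (ξ : ℝ) (hξ : 1 ≤ ξ)
    (hsc : StronglyConnected A) :
    MinBalanced A c ξ ↔
      ∀ S : Set V, S.Nonempty → S ≠ Set.univ →
        sInf {t | ∃ x ∉ S, ∃ y ∈ S, A x y ∧ c x y = t} ≤
          ξ * sInf {t | ∃ x ∈ S, ∃ y ∉ S, A x y ∧ c x y = t} := by
  simp only [← cutCosts_compl, ← cutCosts.eq_1]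
  constructor
  · intro hbal S ⟨u, hu⟩ hS
    obtain ⟨v, hv⟩ := Set.nonempty_compl.mpr hS
    obtain ⟨x, hx, y, hy, hxy, hmin⟩ := exists_arc_leaving_eq_sInf_cutCosts (c := c) hsc hu hv
    obtain ⟨l, ⟨-, hret, -⟩, hcheap⟩ := hbal x y hxy
    obtain ⟨a, ha, b, hb, hab, hmem⟩ := hret.exists_arc_leaving (S := Sᶜ) hy (not_not.mpr hx)
    calc sInf (cutCosts A c Sᶜ) ≤ c a b := sInf_cutCosts_le ha hb hab
      _ ≤ ξ * c x y := hcheap (a, b) (List.mem_cons_of_mem _ hmem)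
      _ = ξ * sInf (cutCosts A c S) := by rw [hmin]
  · intro hcut x y hxy
    set T := {v | Relation.ReflTransGen (fun a b => A a b ∧ c a b ≤ ξ * c x y) y v}
    have hyT : y ∈ T := Relation.ReflTransGen.refl
    have hxT : x ∈ T := by
      by_contra hxT
      obtain ⟨a, ha, b, hb, hab, hmin⟩ :=
        exists_arc_leaving_eq_sInf_cutCosts (c := c) hsc hyT hxT
      refine lt_irrefl (c a b) ?_
      calc c a b = sInf (cutCosts A c T) := hmin
        _ ≤ ξ * sInf (cutCosts A c Tᶜ) := by
          simpa using hcut Tᶜ ⟨x, hxT⟩ (Set.compl_ne_univ.mpr ⟨y, hyT⟩)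
        _ ≤ ξ * c x y := mul_le_mul_of_nonneg_left
          (sInf_cutCosts_le (show x ∈ Tᶜ from hxT) (not_not.mpr hyT) hxy) (by linarith)
        _ < c a b := lt_of_mem_cutCosts_reachable ⟨a, ha, b, hb, hab, rfl⟩
    obtain ⟨l, hret, hnd, hcheap⟩ := exists_nodup_walk_of_reflTransGen hxT
    refine ⟨l, ⟨hxy, hret, hnd⟩, ?_⟩
    rintro f (_ | ⟨_, hf⟩)
    exacts [le_mul_of_one_le_left (hc x y hxy) hξ, hcheap f hf]
end

section
/- Let G=(N,A,c) be a strongly connected directed graph where all arc costs are nonnegative and each cycle through any fixed arc e of cost c(e) > 0 can be chosen with all arcs of cost at most 7n²·c(e) (i.e., c is 7n²-min-balanced). If c^π is any nonnegative reduced cost of c, then for every arc e, c^π(e) ≤ 7n³·c(e), where n = |N|. -/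
open scoped Classical

variable {V : Type*}

/-!
The reduced cost of an arc `e` is at most the reduced cost of any cycle through `e`, because
the other arcs have nonnegative reduced cost; and the reduced cost of a cycle equals its cost,
since the potential differences telescope around it. A min-balanced cycle through `e` is
simple, so it has at most `n` arcs, each of cost at most `7n²·c(e)`.
-/

def reducedCost (c : V → V → ℝ) (π : V → ℝ) (x y : V) : ℝ := c x y + π x - π y

section Walks

variable {A : V → V → Prop}

@[simp]
lemma walkArcs_nil (u : V) : walkArcs u [] = [] := rfl

@[simp]
lemma walkArcs_cons (u a : V) (l : List V) : walkArcs u (a :: l) = (u, a) :: walkArcs a l :=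
  rfl

@[simp]
lemma length_walkArcs (u : V) (l : List V) : (walkArcs u l).length = l.length := by
  simp [walkArcs]

lemma sum_walkArcs_sub (π : V → ℝ) : ∀ (u : V) (l : List V),
    ((walkArcs u l).map fun f => π f.1 - π f.2).sum
      = π u - π ((u :: l).getLast (List.cons_ne_nil u l))
  | u, [] => by simp
  | u, a :: l => by
    rw [walkArcs_cons, List.map_cons, List.sum_cons, sum_walkArcs_sub π a l,
      List.getLast_cons (List.cons_ne_nil a l)]
    ring

lemma rel_of_mem_walkArcs : ∀ {u : V} {l : List V}, (u :: l).IsChain A →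
    ∀ f ∈ walkArcs u l, A f.1 f.2
  | _, [], _, f, hf => by simp at hf
  | _, _ :: _, h, f, hf => by
    rw [List.isChain_cons_cons] at h
    rcases List.mem_cons.1 hf with rfl | hf
    · exact h.1
    · exact rel_of_mem_walkArcs h.2 f hf

lemma IsWalk.sum_sub {u v : V} {l : List V} (h : IsWalk A u v l) (π : V → ℝ) :
    ((walkArcs u l).map fun f => π f.1 - π f.2).sum = π u - π v := by
  rw [sum_walkArcs_sub, h.2]

end Walks

namespace IsCycleThrough

variable {A : V → V → Prop} {x y : V} {l : List V}

lemma rel_of_mem_cycleArcs (h : IsCycleThrough A x y l) : ∀ f ∈ cycleArcs x y l, A f.1 f.2 := by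
  intro f hf
  rcases List.mem_cons.1 hf with rfl | hf
  · exact h.1
  · exact rel_of_mem_walkArcs h.2.1.1 f hf

lemma length_cycleArcs_le [Fintype V] (h : IsCycleThrough A x y l) :
    (cycleArcs x y l).length ≤ Fintype.card V := by
  simpa [cycleArcs] using h.2.2.length_le_card

lemma sum_reducedCost (h : IsCycleThrough A x y l) (c : V → V → ℝ) (π : V → ℝ) :
    ((cycleArcs x y l).map fun f => reducedCost c π f.1 f.2).sum
      = ((cycleArcs x y l).map fun f => c f.1 f.2).sum := by
  have htelescope : ((cycleArcs x y l).map fun f => π f.1 - π f.2).sum = 0 := by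
    simp only [cycleArcs, List.map_cons, List.sum_cons, h.2.1.sum_sub π]
    ring
  simp only [reducedCost, add_sub_assoc, List.sum_map_add, htelescope, add_zero]

lemma reducedCost_le_sum_cost (h : IsCycleThrough A x y l) {c : V → V → ℝ} {π : V → ℝ}
    (hπ : ∀ u v, A u v → 0 ≤ reducedCost c π u v) :
    reducedCost c π x y ≤ ((cycleArcs x y l).map fun f => c f.1 f.2).sum := by
  rw [← h.sum_reducedCost c π, cycleArcs, List.map_cons, List.sum_cons, le_add_iff_nonneg_right]
  exact List.sum_nonneg <| List.forall_mem_map.2 fun f hf =>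
    hπ f.1 f.2 (rel_of_mem_walkArcs h.2.1.1 f hf)

end IsCycleThrough

theorem MinBalanced.reducedCost_le [Fintype V] {A : V → V → Prop} {c : V → V → ℝ} {ξ : ℝ}
    (hbal : MinBalanced A c ξ) (hξ : 0 ≤ ξ) {π : V → ℝ}
    (hπ : ∀ u v, A u v → 0 ≤ reducedCost c π u v) {x y : V} (hxy : A x y) (hc : 0 ≤ c x y) :
    reducedCost c π x y ≤ Fintype.card V * (ξ * c x y) := by
  obtain ⟨l, hcycle, hbound⟩ := hbal x y hxy
  calc reducedCost c π x y ≤ ((cycleArcs x y l).map fun f => c f.1 f.2).sum :=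
        hcycle.reducedCost_le_sum_cost hπ
    _ ≤ ((cycleArcs x y l).map fun f => c f.1 f.2).length • (ξ * c x y) :=
        List.sum_le_card_nsmul _ _ (List.forall_mem_map.2 hbound)
    _ ≤ Fintype.card V * (ξ * c x y) := by
        rw [List.length_map, nsmul_eq_mul]
        gcongr
        exact_mod_cast hcycle.length_cycleArcs_le

theorem reduced_cost_upper_bound_of_rough_balance_general [Fintype V]
    (A : V → V → Prop) (c : V → V → ℝ) (hc : ∀ x y, A x y → 0 ≤ c x y)
    (hbal : MinBalanced A c (7 * (Fintype.card V : ℝ) ^ 2))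
    (π : V → ℝ) (hπ : ∀ x y, A x y → 0 ≤ c x y + π x - π y) :
    ∀ x y, A x y → c x y + π x - π y ≤ 7 * (Fintype.card V : ℝ) ^ 3 * c x y := by
  intro x y hxy
  calc c x y + π x - π y ≤ Fintype.card V * (7 * (Fintype.card V : ℝ) ^ 2 * c x y) :=
        hbal.reducedCost_le (by positivity) hπ hxy (hc x y hxy)
    _ = 7 * (Fintype.card V : ℝ) ^ 3 * c x y := by ring

/-- If `c` is a nonnegative `7n²`-min-balanced cost function on a
strongly connected digraph and `c^π` is any nonnegative reduced cost of `c`, then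
`c^π(e) ≤ 7n³·c(e)` for every arc `e`, where `n = |N|`. -/
theorem reduced_cost_upper_bound_of_rough_balance [Fintype V]
    (A : V → V → Prop) (c : V → V → ℝ) (hc : ∀ x y, A x y → 0 ≤ c x y)
    (hsc : StronglyConnected A)
    (hbal : MinBalanced A c (7 * (Fintype.card V : ℝ) ^ 2))
    (π : V → ℝ) (hπ : ∀ x y, A x y → 0 ≤ c x y + π x - π y) :
    ∀ x y, A x y → c x y + π x - π y ≤ 7 * (Fintype.card V : ℝ) ^ 3 * c x y :=
  reduced_cost_upper_bound_of_rough_balance_general A c hc hbal π hπ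
end

section
/- Let r > 0 and let G be a digraph. Let (N₁,...,N_s) be the strongly connected components of G[≤r] and (U₁,...,U_k) those of G[<r]. Then for every arc e inside some component N_j of G[≤r] but not inside any strongly connected component of G[<r], the balance value satisfies β(e) = max{r, c(e)}. -/
/-! A cycle through `e = (x, y)` whose arcs cost at most `t` contains `e`, so `t ≥ c(e)`; and if
`t < r` the whole cycle lies in `G[<r]`, which would put `e` inside a strongly connected
component of `G[<r]`. Hence `β(e) ≥ max{r, c(e)}`. Conversely, a walk from `y` back to `x` in
`G[≤r]`, shortcut to a simple path and closed by `e`, is a cycle through `e` with all arc costs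
at most `max{r, c(e)}`. -/

open scoped Classical

variable {V : Type*}

section Walks

variable {A B P : V → V → Prop} {u v w x y : V} {l : List V}

theorem isChain_cons_iff_forall_walkArcs :
    (u :: l).IsChain B ↔ ∀ f ∈ walkArcs u l, B f.1 f.2 := by
  induction l generalizing u with
  | nil => simp [walkArcs]
  | cons w t ih => simp [walkArcs, List.isChain_cons_cons, ih]

theorem isWalk_iff :
    IsWalk B u v l ↔
      (∀ f ∈ walkArcs u l, B f.1 f.2) ∧ (u :: l).getLast (List.cons_ne_nil u l) = v :=
  and_congr_left' isChain_cons_iff_forall_walkArcs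

theorem isWalk_cons_iff_s9 : IsWalk B u v (w :: l) ↔ B u w ∧ IsWalk B w v l := by
  simp [isWalk_iff, walkArcs, and_assoc]

theorem isWalk_and_iff :
    IsWalk (fun a b => A a b ∧ P a b) u v l ↔ IsWalk A u v l ∧ ∀ f ∈ walkArcs u l, P f.1 f.2 := by
  simp only [isWalk_iff, forall_and]
  tauto

theorem IsWalk.mono (hw : IsWalk A u v l) (hAB : ∀ ⦃a b⦄, A a b → B a b) : IsWalk B u v l :=
  ⟨List.IsChain.imp hAB hw.1, hw.2⟩

theorem IsWalk.of_append_cons {l₁ l₂ : List V} (hw : IsWalk B u v (l₁ ++ w :: l₂)) :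
    IsWalk B w v l₂ :=
  ⟨hw.1.suffix ⟨u :: l₁, rfl⟩,
    (List.getLast_append_of_ne_nil (l := u :: l₁) (List.cons_ne_nil _ _) _).symm.trans hw.2⟩

theorem IsWalk.exists_nodup (hw : IsWalk B u v l) : ∃ l', IsWalk B u v l' ∧ (u :: l').Nodup := by
  induction l generalizing u with
  | nil => exact ⟨[], hw, List.nodup_singleton u⟩
  | cons w t ih =>
    obtain ⟨huw, hwv⟩ := isWalk_cons_iff_s9.1 hw
    obtain ⟨t', hwt', hnd⟩ := ih hwv
    by_cases hu : u ∈ w :: t'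
    · obtain ⟨l₁, l₂, hsplit⟩ := List.append_of_mem hu
      have hloop : IsWalk B u v (l₁ ++ u :: l₂) := hsplit ▸ isWalk_cons_iff_s9.2 ⟨huw, hwt'⟩
      exact ⟨l₂, hloop.of_append_cons, hnd.sublist (hsplit ▸ (List.suffix_append l₁ _).sublist)⟩
    · exact ⟨w :: t', isWalk_cons_iff_s9.2 ⟨huw, hwt'⟩, List.nodup_cons.2 ⟨hu, hnd⟩⟩

theorem isCycleThrough_and_iff :
    IsCycleThrough (fun a b => A a b ∧ P a b) x y l ↔
      IsCycleThrough A x y l ∧ ∀ f ∈ cycleArcs x y l, P f.1 f.2 := by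
  simp only [IsCycleThrough, cycleArcs, isWalk_and_iff, List.forall_mem_cons]
  tauto

theorem IsWalk.exists_isCycleThrough (hw : IsWalk B y x l) (hxy : B x y) :
    ∃ l', IsCycleThrough B x y l' := by
  obtain ⟨l', hw', hnd⟩ := hw.exists_nodup
  exact ⟨l', hxy, hw', hnd⟩

theorem IsCycleThrough.mutually_reachable (h : IsCycleThrough B x y l) :
    B x y ∧ (∃ l, IsWalk B x y l) ∧ ∃ l, IsWalk B y x l :=
  ⟨h.1, ⟨[y], isWalk_cons_iff_s9.2 ⟨h.1, List.isChain_singleton y, rfl⟩⟩, ⟨l, h.2.1⟩⟩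

end Walks

theorem balanceValue_at_threshold_general (A : V → V → Prop) (c : V → V → ℝ)
    (r : ℝ) (x y : V) (hxy : A x y)
    (hle : (∃ l, IsWalk (fun u v => A u v ∧ c u v ≤ r) x y l) ∧
           (∃ l, IsWalk (fun u v => A u v ∧ c u v ≤ r) y x l))
    (hlt : ¬ (c x y < r ∧ (∃ l, IsWalk (fun u v => A u v ∧ c u v < r) x y l) ∧
           (∃ l, IsWalk (fun u v => A u v ∧ c u v < r) y x l))) :
    balanceValue A c x y = max r (c x y) := by
  refine IsLeast.csInf_eq ⟨?_, ?_⟩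
  · obtain ⟨l, hl⟩ := hle.2
    have hlM : IsWalk (fun u v => A u v ∧ c u v ≤ max r (c x y)) y x l :=
      hl.mono fun _ _ hab => ⟨hab.1, hab.2.trans (le_max_left _ _)⟩
    obtain ⟨l', hcyc⟩ := hlM.exists_isCycleThrough ⟨hxy, le_max_right _ _⟩
    exact ⟨l', isCycleThrough_and_iff.1 hcyc⟩
  · rintro t ⟨l, hcyc, hcost⟩
    have hxy_le : c x y ≤ t := hcost (x, y) List.mem_cons_self
    refine max_le (le_of_not_gt fun htr => hlt ?_) hxy_le
    obtain ⟨hxy_lt, hfwd, hbwd⟩ := (isCycleThrough_and_iff (P := fun a b => c a b < r)).2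
      ⟨hcyc, fun f hf => (hcost f hf).trans_lt htr⟩ |>.mutually_reachable
    exact ⟨hxy_lt.2, hfwd, hbwd⟩

/-- Let `r > 0`. For an arc `e = (x,y)` whose endpoints lie in the same
strongly connected component of `G[≤r]`, but which does not lie inside a strongly
connected component of `G[<r]` (i.e. it is not an arc of cost `< r` with mutually
`<r`-reachable endpoints), the balance value is `β(e) = max{r, c(e)}`. -/
theorem balanceValue_at_threshold [Fintype V] (A : V → V → Prop) (c : V → V → ℝ)
    (hc : ∀ x y, A x y → 0 < c x y) (hsc : StronglyConnected A)
    (r : ℝ) (hr : 0 < r) (x y : V) (hxy : A x y)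
    (hle : (∃ l, IsWalk (fun u v => A u v ∧ c u v ≤ r) x y l) ∧
           (∃ l, IsWalk (fun u v => A u v ∧ c u v ≤ r) y x l))
    (hlt : ¬ (c x y < r ∧ (∃ l, IsWalk (fun u v => A u v ∧ c u v < r) x y l) ∧
           (∃ l, IsWalk (fun u v => A u v ∧ c u v < r) y x l))) :
    balanceValue A c x y = max r (c x y) :=
  balanceValue_at_threshold_general A c r x y hxy hle hlt
end

section
/- Let (L_t), (D_t) be defined by: L is fixed on blocks of 2^ρ iterations with D_t = L_{t'}/2^ρ whenever t'−1 is a multiple of 2^ρ and D unchanged within a block, and L_{t+1} ≥ L_t + D_t for all t. Then L_{t+2^ρ} ≥ 2·L_t for every t. -/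
/-!
Write `N = 2^ρ` and split time into blocks `kN + 1, …, kN + N`. Inside a block the increment
`D` stays equal to `L/N` evaluated at the start of the block, so `L` grows linearly and reaches
`(2 - 1/N)·L(kN + 1)` at the end of the block; the last step adds one more `L(kN + 1)/N`, so `L`
doubles from the start of one block to the start of the next. Since `L` at offset `i` into a
block is the block's starting value times `1 + i/N`, the doubling transfers to every `t`.
-/

namespace BlockSchedule

variable {N : ℕ} {L D : ℕ → ℝ}

theorem not_dvd_mul_add {k j : ℕ} (hj : 0 < j) (hjN : j < N) : ¬ N ∣ k * N + j :=
  (Nat.dvd_add_right (dvd_mul_left N k)).not.mpr (Nat.not_dvd_of_pos_of_lt hj hjN)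

theorem D_eq_of_lt (hstart : ∀ t, 1 ≤ t → N ∣ t - 1 → D t = L t / N)
    (hcarry : ∀ t, 1 ≤ t → ¬ N ∣ t - 1 → D t = D (t - 1)) (k : ℕ) :
    ∀ {i}, i < N → D (k * N + 1 + i) = L (k * N + 1) / N
  | 0, _ => hstart _ (by omega) ⟨k, by simp [mul_comm]⟩
  | i + 1, hi => by
    have hnd : ¬ N ∣ k * N + 1 + (i + 1) - 1 := by
      rw [show k * N + 1 + (i + 1) - 1 = k * N + (i + 1) by omega]
      exact not_dvd_mul_add (by omega) hi
    rw [hcarry _ (by omega) hnd, show k * N + 1 + (i + 1) - 1 = k * N + 1 + i by omega]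
    exact D_eq_of_lt hstart hcarry k (by omega)

theorem L_eq_of_lt (hstart : ∀ t, 1 ≤ t → N ∣ t - 1 → D t = L t / N)
    (hcarry : ∀ t, 1 ≤ t → ¬ N ∣ t - 1 → D t = D (t - 1))
    (hstep : ∀ t, 1 ≤ t → ¬ N ∣ t → L (t + 1) = L t + D t) (k : ℕ) :
    ∀ {i}, i < N → L (k * N + 1 + i) = (1 + i / N) * L (k * N + 1)
  | 0, _ => by simp
  | i + 1, hi => by
    have hnd : ¬ N ∣ k * N + 1 + i := by
      rw [add_assoc]
      exact not_dvd_mul_add (by omega) (by omega)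
    rw [← add_assoc, hstep _ (by omega) hnd, L_eq_of_lt hstart hcarry hstep k (by omega),
      D_eq_of_lt hstart hcarry k (by omega)]
    push_cast
    ring

theorem two_mul_le_next_block_start (hstart : ∀ t, 1 ≤ t → N ∣ t - 1 → D t = L t / N)
    (hcarry : ∀ t, 1 ≤ t → ¬ N ∣ t - 1 → D t = D (t - 1))
    (hjump : ∀ t, 1 ≤ t → N ∣ t → L t + D t ≤ L (t + 1))
    (hstep : ∀ t, 1 ≤ t → ¬ N ∣ t → L (t + 1) = L t + D t) (hN : 0 < N) (k : ℕ) :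
    2 * L (k * N + 1) ≤ L ((k + 1) * N + 1) := by
  have hlast : k * N + 1 + (N - 1) = (k + 1) * N := by rw [add_mul]; omega
  have hjump_last := hjump _ (by omega) (hlast ▸ dvd_mul_left N (k + 1))
  rw [L_eq_of_lt hstart hcarry hstep k (by omega), D_eq_of_lt hstart hcarry k (by omega),
    hlast] at hjump_last
  have hN' : (0 : ℝ) < N := by exact_mod_cast hN
  calc 2 * L (k * N + 1)
      = (1 + ((N - 1 : ℕ) : ℝ) / N) * L (k * N + 1) + L (k * N + 1) / N := by
        rw [Nat.cast_sub hN, Nat.cast_one]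
        field_simp
        ring
    _ ≤ L ((k + 1) * N + 1) := hjump_last

theorem two_mul_le_add_period (hstart : ∀ t, 1 ≤ t → N ∣ t - 1 → D t = L t / N)
    (hcarry : ∀ t, 1 ≤ t → ¬ N ∣ t - 1 → D t = D (t - 1))
    (hjump : ∀ t, 1 ≤ t → N ∣ t → L t + D t ≤ L (t + 1))
    (hstep : ∀ t, 1 ≤ t → ¬ N ∣ t → L (t + 1) = L t + D t) (hN : 0 < N) {t : ℕ} (ht : 1 ≤ t) :
    2 * L t ≤ L (t + N) := by
  obtain ⟨k, i, hi, rfl⟩ : ∃ k i, i < N ∧ t = k * N + 1 + i :=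
    ⟨(t - 1) / N, (t - 1) % N, Nat.mod_lt _ hN, by
      have := Nat.div_add_mod (t - 1) N; rw [mul_comm] at this; omega⟩
  rw [show k * N + 1 + i + N = (k + 1) * N + 1 + i by rw [add_mul]; omega,
    L_eq_of_lt hstart hcarry hstep k hi, L_eq_of_lt hstart hcarry hstep (k + 1) hi]
  have hfactor : (0 : ℝ) ≤ 1 + i / N := by positivity
  nlinarith [two_mul_le_next_block_start hstart hcarry hjump hstep hN k]

end BlockSchedule

/-- Suppose `D_t = L_t/2^ρ` whenever `t − 1` is a multiple of `2^ρ`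
and `D_t = D_{t−1}` otherwise, and `L_{t+1} = L_t + D_t` except at block boundaries
(`2^ρ ∣ t`), where `L_{t+1} ≥ L_t + D_t` may jump. Then `L_{t+2^ρ} ≥ 2·L_t` for every
`t ≥ 1`. -/
theorem L_doubles_every_block (ρ : ℕ) (L D : ℕ → ℝ)
    (hD : ∀ t : ℕ, 1 ≤ t →
      (2 ^ ρ ∣ (t - 1) → D t = L t / 2 ^ ρ) ∧ (¬ 2 ^ ρ ∣ (t - 1) → D t = D (t - 1)))
    (hL : ∀ t : ℕ, 1 ≤ t →
      (2 ^ ρ ∣ t → L t + D t ≤ L (t + 1)) ∧ (¬ 2 ^ ρ ∣ t → L (t + 1) = L t + D t)) :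
    ∀ t : ℕ, 1 ≤ t → 2 * L t ≤ L (t + 2 ^ ρ) := by
  intro t ht
  exact BlockSchedule.two_mul_le_add_period (N := 2 ^ ρ)
    (fun t ht => by exact_mod_cast (hD t ht).1) (fun t ht => (hD t ht).2)
    (fun t ht => (hL t ht).1) (fun t ht => (hL t ht).2) (by positivity) ht
end

section
/- In a label-setting shortest path computation, suppose whenever a node j is made permanent, D(j) ≤ D(i) + b(i,j) holds for every non-permanent node i, where D are the maintained upper bounds, D(j) equals the shortest path distance restricted to permanent nodes plus one final arc, and b is the bottleneck cost. Then at termination D(j) = d(j) for all nodes j, the true shortest path distances. -/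
open scoped Classical

variable {V : Type*}

open scoped ENNReal

/-- The (extended-real-valued) cost of a walk. -/
noncomputable def ewalkCost (c : V → V → ℝ≥0∞) (u : V) (l : List V) : ℝ≥0∞ :=
  ((walkArcs u l).map fun e => c e.1 e.2).sum

/-- The shortest-walk distance from `s` to `j` among walks all of whose nodes other than
the terminal node `j` lie in the set `S` (it is `∞` if no such walk exists). -/
noncomputable def restrictedDist (A : V → V → Prop) (c : V → V → ℝ≥0∞) (S : Set V)
    (s j : V) : ℝ≥0∞ :=
  ⨅ l : {l : List V // IsWalk A s j l ∧ ∀ x ∈ (s :: l).dropLast, x ∈ S},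
    ewalkCost c s (l : List V)

/-- The (extended-real-valued) bottleneck cost. -/
noncomputable def ebottleneck (A : V → V → Prop) (c : V → V → ℝ≥0∞) (i j : V) : ℝ≥0∞ :=
  sInf {t | ∃ l, IsWalk A i j l ∧ ∀ f ∈ walkArcs i l, c f.1 f.2 ≤ t}

/-! Every `s`–`j` walk costs at least `D(j)`: it either stays among the nodes made permanent
before `j` (so `D(j)` already accounts for it), or it has a first node `i` outside them. If
`i = j` the walk's prefix is again such a walk; otherwise `i` is made permanent after `j`, its
prefix bounds `D(i)` and its suffix bounds `b(i,j)`, so Dinitz's inequality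
`D(j) ≤ D(i) + b(i,j)` gives `D(j) ≤` the cost of the walk. -/

section Walks

variable {A : V → V → Prop} {c : V → V → ℝ≥0∞}

@[simp]
theorem isWalk_nil {u v : V} : IsWalk A u v [] ↔ u = v := by
  simp [IsWalk, List.Chain]

@[simp]
theorem isWalk_cons {u v w : V} {l : List V} :
    IsWalk A u v (w :: l) ↔ A u w ∧ IsWalk A w v l := by
  simp [IsWalk, List.Chain, and_assoc]

@[simp]
theorem ewalkCost_nil (u : V) : ewalkCost c u [] = 0 := by
  simp [ewalkCost, walkArcs]

@[simp]
theorem ewalkCost_cons (u w : V) (l : List V) :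
    ewalkCost c u (w :: l) = c u w + ewalkCost c w l := by
  simp [ewalkCost, walkArcs]

theorem IsWalk.ewalkCost_append {u i : V} {P : List V} (hP : IsWalk A u i P) (Q : List V) :
    ewalkCost c u (P ++ Q) = ewalkCost c u P + ewalkCost c i Q := by
  induction P generalizing u with
  | nil => simp_all
  | cons w P ih =>
    rw [isWalk_cons] at hP
    simp only [List.cons_append, ewalkCost_cons, ih hP.2, add_assoc]

theorem IsWalk.exists_split_at_first_not {p : V → Prop} {u v : V} {l : List V}
    (hl : IsWalk A u v l) (hv : ¬ p v) :
    ∃ i P Q, l = P ++ Q ∧ IsWalk A u i P ∧ IsWalk A i v Q ∧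
      (∀ x ∈ (u :: P).dropLast, p x) ∧ ¬ p i := by
  induction l generalizing u with
  | nil =>
    obtain rfl := isWalk_nil.1 hl
    exact ⟨u, [], [], rfl, isWalk_nil.2 rfl, isWalk_nil.2 rfl, by simp, hv⟩
  | cons w l ih =>
    by_cases hu : p u
    · obtain ⟨i, P, Q, rfl, hP, hQ, hPp, hi⟩ := ih (isWalk_cons.1 hl).2
      refine ⟨i, w :: P, Q, rfl, isWalk_cons.2 ⟨(isWalk_cons.1 hl).1, hP⟩, hQ, ?_, hi⟩
      simpa [List.dropLast_cons₂, hu] using hPp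
    · exact ⟨u, [], w :: l, rfl, isWalk_nil.2 rfl, hl, by simp, hu⟩

theorem ebottleneck_le_ewalkCost {i j : V} {l : List V} (hl : IsWalk A i j l) :
    ebottleneck A c i j ≤ ewalkCost c i l :=
  sInf_le ⟨l, hl, fun _ hf => List.single_le_sum (fun _ _ => zero_le) _ (List.mem_map_of_mem hf)⟩

theorem restrictedDist_le_ewalkCost {S : Set V} {s j : V} {l : List V} (hl : IsWalk A s j l)
    (hS : ∀ x ∈ (s :: l).dropLast, x ∈ S) :
    restrictedDist A c S s j ≤ ewalkCost c s l :=
  iInf_le_of_le ⟨l, hl, hS⟩ le_rfl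

theorem restrictedDist_anti {S T : Set V} (hST : S ⊆ T) (s j : V) :
    restrictedDist A c T s j ≤ restrictedDist A c S s j :=
  le_iInf fun ⟨_, hl, hS⟩ => restrictedDist_le_ewalkCost hl fun x hx => hST (hS x hx)

theorem le_restrictedDist_univ {s j : V} {d : ℝ≥0∞}
    (h : ∀ l, IsWalk A s j l → d ≤ ewalkCost c s l) :
    d ≤ restrictedDist A c Set.univ s j :=
  le_iInf fun ⟨l, hl, _⟩ => h l hl

end Walks

theorem le_ewalkCost_of_dinitz {A : V → V → Prop} {c : V → V → ℝ≥0∞} {s : V}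
    {order : V → ℕ} (hinj : Function.Injective order) {D : V → ℝ≥0∞}
    (hD : ∀ j, D j = restrictedDist A c {x | order x < order j} s j)
    (hDinitz : ∀ i j : V, order j < order i →
      D j ≤ restrictedDist A c {x | order x < order j} s i + ebottleneck A c i j)
    {j : V} {l : List V} (hl : IsWalk A s j l) :
    D j ≤ ewalkCost c s l := by
  obtain ⟨i, P, Q, rfl, hP, hQ, hPS, hi⟩ :=
    hl.exists_split_at_first_not (p := (· ∈ {x | order x < order j})) (lt_irrefl (order j))
  have hprefix := restrictedDist_le_ewalkCost (c := c) hP hPS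
  rw [hP.ewalkCost_append]
  rcases eq_or_ne i j with rfl | hij
  · exact hD i ▸ hprefix.trans le_self_add
  · have hji : order j < order i := (not_lt.1 hi).lt_of_ne fun h => hij (hinj h.symm)
    exact (hDinitz i j hji).trans (add_le_add hprefix (ebottleneck_le_ewalkCost hQ))

theorem label_setting_correctness_general (A : V → V → Prop) (c : V → V → ℝ≥0∞)
    (s : V) (order : V → ℕ) (hinj : Function.Injective order)
    (D : V → ℝ≥0∞)
    (hD : ∀ j, D j = restrictedDist A c {x | order x < order j} s j)
    (hDinitz : ∀ i j : V, order j < order i →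
      D j ≤ restrictedDist A c {x | order x < order j} s i + ebottleneck A c i j) :
    ∀ j, D j = restrictedDist A c Set.univ s j := fun j =>
  le_antisymm (le_restrictedDist_univ fun _ hl => le_ewalkCost_of_dinitz hinj hD hDinitz hl)
    (hD j ▸ restrictedDist_anti (Set.subset_univ _) s j)

/-- (Dinitz's criterion.) In a label-setting shortest path computation
with source `s`, nodes are made permanent at times `order : V → ℕ` (with `s` first), and
the label of a node `j` equals the shortest-walk distance using only nodes permanent
before `j` as intermediate nodes. If whenever `j` is made permanent,
`D(j) ≤ D(i) + b(i,j)` holds for every node `i` that is not yet permanent (where `D(i)`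
is `i`'s current label), then at termination `D(j) = d(j)`, the true shortest path
distance, for every node `j`. -/
theorem label_setting_correctness [Fintype V] (A : V → V → Prop) (c : V → V → ℝ≥0∞)
    (s : V) (order : V → ℕ) (hinj : Function.Injective order)
    (hs : ∀ x, x ≠ s → order s < order x)
    (D : V → ℝ≥0∞)
    (hD : ∀ j, D j = restrictedDist A c {x | order x < order j} s j)
    (hDinitz : ∀ i j : V, order j < order i →
      D j ≤ restrictedDist A c {x | order x < order j} s i + ebottleneck A c i j) :
    ∀ j, D j = restrictedDist A c Set.univ s j :=
  label_setting_correctness_general A c s order hinj D hD hDinitz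
end
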